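/- arXiv:1601.01342 — 2 statements merged into one kernel-verified Lean document; each statement's English description precedes it below -/
import Mathlib

section
/- Let V be a finite rooted tree (as in the context) with depth function d and height H. Let ε₀ ∈ [0, 1), let s : V → ℝ satisfy s k ≥ 0 for all k, and let S : V → ℝ satisfy, for every j ≠ r, (1 − ε₀)·S j ≤ (∑_{k ∈ ch(j)} S k) + s j. Then for every j ≠ r, S j ≤ (∑_{k ∈ Λ(j)} s k) / (1 − ε₀)^(H − d(j) + 1). -/
/-- A finite rooted tree: a distinguished root and a parent map under which
every node reaches the root, the root is its own parent, and no other node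
is its own parent. -/
structure FiniteRootedTree (V : Type*) where
  root : V
  parent : V → V
  parent_root : parent root = root
  parent_ne : ∀ v, v ≠ root → parent v ≠ v
  reaches_root : ∀ v, ∃ n : ℕ, parent^[n] v = root

namespace FiniteRootedTree

variable {V : Type*} [Fintype V] [DecidableEq V]

/-- The children of a node `j`. -/
def children (T : FiniteRootedTree V) (j : V) : Finset V :=
  Finset.univ.filter fun k => k ≠ T.root ∧ T.parent k = j

open Classical in
/-- The subtree `Λ(j)` rooted at `j` (the descendants of `j`, including `j`). -/
noncomputable def subtree (T : FiniteRootedTree V) (j : V) : Finset V :=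
  Finset.univ.filter fun k => ∃ n : ℕ, T.parent^[n] k = j

open Classical in
/-- The path set `P(j)`: the ancestors of `j`, excluding the root and
including `j` itself. -/
noncomputable def pathSet (T : FiniteRootedTree V) (j : V) : Finset V :=
  Finset.univ.filter fun k => k ≠ T.root ∧ ∃ n : ℕ, T.parent^[n] j = k

/-- The depth `d(j)`: the least `n` with `parent^[n] j = root`. -/
noncomputable def depth (T : FiniteRootedTree V) (j : V) : ℕ :=
  Nat.find (T.reaches_root j)

/-- The height `H` of the tree: the maximum depth over all nodes. -/
noncomputable def height (T : FiniteRootedTree V) : ℕ :=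
  Finset.univ.sup fun v => T.depth v

end FiniteRootedTree

open FiniteRootedTree

/-! Write `c = 1 - ε₀`. Going up the tree from the leaves,
`c ^ (H - d(j) + 1) * S j ≤ ∑_{Λ(j)} s`: multiply the loss inequality at `j` by
`c ^ (H - d(j))`, which is exactly the factor the children carry, and use that `Λ(j)` is the
disjoint union of `{j}` and the subtrees of the children of `j`; the leftover factor on `s j`
is at most `1`. -/

namespace FiniteRootedTree

variable {V : Type*} (T : FiniteRootedTree V)

lemma mem_subtree [Fintype V] {j v : V} :
    v ∈ T.subtree j ↔ ∃ n : ℕ, T.parent^[n] v = j := by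
  simp [subtree]

variable [DecidableEq V]

lemma iterate_depth (v : V) : T.parent^[T.depth v] v = T.root :=
  Nat.find_spec (T.reaches_root v)

lemma depth_le_of_iterate_eq_root {v : V} {n : ℕ} (h : T.parent^[n] v = T.root) :
    T.depth v ≤ n :=
  Nat.find_le h

lemma le_depth_of_iterate_ne_root {v : V} {n : ℕ} (h : T.parent^[n] v ≠ T.root) :
    n ≤ T.depth v := by
  by_contra! hlt
  apply h
  rw [← Nat.sub_add_cancel hlt.le, Function.iterate_add_apply, iterate_depth,
    Function.iterate_fixed T.parent_root]

lemma depth_iterate_add {v : V} {n : ℕ} (hn : n ≤ T.depth v) :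
    T.depth (T.parent^[n] v) + n = T.depth v := by
  have hle : T.depth (T.parent^[n] v) ≤ T.depth v - n := by
    apply depth_le_of_iterate_eq_root
    rw [← Function.iterate_add_apply, Nat.sub_add_cancel hn, iterate_depth]
  have hge : T.depth v ≤ T.depth (T.parent^[n] v) + n := by
    apply depth_le_of_iterate_eq_root
    rw [Function.iterate_add_apply, iterate_depth]
  omega

variable [Fintype V]

lemma depth_le_height (v : V) : T.depth v ≤ T.height :=
  Finset.le_sup (Finset.mem_univ v)

lemma depth_le_depth_of_mem_subtree {k v : V} (hk : k ≠ T.root) (hv : v ∈ T.subtree k) :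
    T.depth k ≤ T.depth v := by
  obtain ⟨n, rfl⟩ := T.mem_subtree.1 hv
  have := T.depth_iterate_add (T.le_depth_of_iterate_ne_root hk)
  omega

lemma iterate_depth_sub_of_mem_subtree {k v : V} (hk : k ≠ T.root) (hv : v ∈ T.subtree k) :
    T.parent^[T.depth v - T.depth k] v = k := by
  obtain ⟨n, rfl⟩ := T.mem_subtree.1 hv
  rw [← T.depth_iterate_add (T.le_depth_of_iterate_ne_root hk), Nat.add_sub_cancel_left]

lemma mem_children {j k : V} : k ∈ T.children j ↔ k ≠ T.root ∧ T.parent k = j := by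
  simp [children]

lemma ne_root_of_mem_children {j k : V} (hk : k ∈ T.children j) : k ≠ T.root :=
  ((T.mem_children).1 hk).1

lemma depth_of_mem_children {j k : V} (hk : k ∈ T.children j) :
    T.depth k = T.depth j + 1 := by
  obtain ⟨hroot, rfl⟩ := T.mem_children.1 hk
  have hpos : 1 ≤ T.depth k :=
    Nat.one_le_iff_ne_zero.2 fun h => hroot (by simpa [h] using T.iterate_depth k)
  simpa using (T.depth_iterate_add hpos).symm

lemma pairwiseDisjoint_subtree_children (j : V) :
    (T.children j : Set V).PairwiseDisjoint T.subtree := by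
  intro k₁ h₁ k₂ h₂ hne
  refine Finset.disjoint_left.2 fun v hv₁ hv₂ => hne ?_
  rw [← T.iterate_depth_sub_of_mem_subtree (T.ne_root_of_mem_children h₁) hv₁,
    ← T.iterate_depth_sub_of_mem_subtree (T.ne_root_of_mem_children h₂) hv₂,
    T.depth_of_mem_children h₁, T.depth_of_mem_children h₂]

lemma notMem_biUnion_subtree_children (j : V) :
    j ∉ (T.children j).biUnion T.subtree := by
  simp only [Finset.mem_biUnion, not_exists, not_and]
  intro k hk hjk
  have := T.depth_le_depth_of_mem_subtree (T.ne_root_of_mem_children hk) hjk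
  have := T.depth_of_mem_children hk
  omega

lemma subtree_eq_insert_biUnion_children (j : V) :
    T.subtree j = insert j ((T.children j).biUnion T.subtree) := by
  ext v
  simp only [Finset.mem_insert, Finset.mem_biUnion, mem_subtree, mem_children]
  constructor
  · intro hv
    by_cases hvj : v = j
    · exact .inl hvj
    classical
    -- the last step `k` before reaching `j` is a child of `j`; minimality of the path rules
    -- out `k = root` (which would force `j = root` and a shorter path)
    have hn : Nat.find hv ≠ 0 := fun h => hvj (by simpa [h] using Nat.find_spec hv)
    have hk : T.parent (T.parent^[Nat.find hv - 1] v) = j := by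
      rw [← Function.iterate_succ_apply' T.parent, Nat.succ_eq_add_one,
        Nat.sub_add_cancel (Nat.one_le_iff_ne_zero.2 hn), Nat.find_spec hv]
    refine .inr ⟨_, ⟨fun hroot => ?_, hk⟩, _, rfl⟩
    rw [hroot, T.parent_root] at hk
    exact Nat.find_min hv (Nat.sub_lt (Nat.pos_of_ne_zero hn) one_pos) (hroot.trans hk)
  · rintro (rfl | ⟨k, ⟨-, rfl⟩, n, rfl⟩)
    · exact ⟨0, rfl⟩
    · exact ⟨n + 1, Function.iterate_succ_apply' _ _ _⟩

lemma sum_subtree {M : Type*} [AddCommMonoid M] (f : V → M) (j : V) :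
    ∑ v ∈ T.subtree j, f v = f j + ∑ k ∈ T.children j, ∑ v ∈ T.subtree k, f v := by
  rw [subtree_eq_insert_biUnion_children, Finset.sum_insert (T.notMem_biUnion_subtree_children j),
    Finset.sum_biUnion (T.pairwiseDisjoint_subtree_children j)]

theorem pow_mul_le_sum_subtree {c : ℝ} (hc₀ : 0 ≤ c) (hc₁ : c ≤ 1) {s : V → ℝ}
    (hs : ∀ k, 0 ≤ s k) {S : V → ℝ}
    (hS : ∀ j, j ≠ T.root → c * S j ≤ (∑ k ∈ T.children j, S k) + s j)
    (j : V) (hj : j ≠ T.root) :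
    c ^ (T.height - T.depth j + 1) * S j ≤ ∑ v ∈ T.subtree j, s v := by
  have hchild : ∀ k ∈ T.children j, T.height - T.depth k + 1 = T.height - T.depth j := by
    intro k hk
    have := T.depth_of_mem_children hk
    have := T.depth_le_height k
    omega
  have ih : ∀ k ∈ T.children j,
      c ^ (T.height - T.depth k + 1) * S k ≤ ∑ v ∈ T.subtree k, s v := fun k hk =>
    pow_mul_le_sum_subtree hc₀ hc₁ hs hS k (T.ne_root_of_mem_children hk)
  calc c ^ (T.height - T.depth j + 1) * S j
      = c ^ (T.height - T.depth j) * (c * S j) := by ring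
    _ ≤ c ^ (T.height - T.depth j) * ((∑ k ∈ T.children j, S k) + s j) :=
      mul_le_mul_of_nonneg_left (hS j hj) (pow_nonneg hc₀ _)
    _ = ∑ k ∈ T.children j, c ^ (T.height - T.depth k + 1) * S k
          + c ^ (T.height - T.depth j) * s j := by
      rw [mul_add, Finset.mul_sum]
      congr 1
      exact Finset.sum_congr rfl fun k hk => by rw [hchild k hk]
    _ ≤ ∑ k ∈ T.children j, ∑ v ∈ T.subtree k, s v + s j :=
      add_le_add (Finset.sum_le_sum ih) (mul_le_of_le_one_left (hs j) (pow_le_one₀ hc₀ hc₁))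
    _ = ∑ v ∈ T.subtree j, s v := by rw [sum_subtree, add_comm]
termination_by T.height - T.depth j
decreasing_by
  have := T.depth_of_mem_children hk
  have := T.depth_le_height k
  omega

end FiniteRootedTree

open FiniteRootedTree

/-- Lemma 2 (componentwise): under the small line losses assumption
`(1−ε₀)·S j ≤ (∑_{k ∈ ch(j)} S k) + s j` with nonnegative injections `s`,
the flow `S j` is bounded above by the LPF flow `∑_{k ∈ Λ(j)} s k` divided by
`(1−ε₀)^(H − d(j) + 1)`. -/
theorem npf_flow_upper_bound {V : Type*} [Fintype V] [DecidableEq V]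
    (T : FiniteRootedTree V) (ε₀ : ℝ) (hε₀ : 0 ≤ ε₀) (hε₁ : ε₀ < 1)
    (s : V → ℝ) (hs : ∀ k, 0 ≤ s k)
    (S : V → ℝ)
    (hS : ∀ j, j ≠ T.root → (1 - ε₀) * S j ≤ (∑ k ∈ T.children j, S k) + s j) :
    ∀ j, j ≠ T.root →
      S j ≤ (∑ k ∈ T.subtree j, s k) / (1 - ε₀) ^ (T.height - T.depth j + 1) := by
  intro j hj
  have hc : 0 < 1 - ε₀ := by linarith
  rw [le_div_iff₀ (pow_pos hc _), mul_comm]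
  exact T.pow_mul_le_sum_subtree hc.le (by linarith) hs hS j hj
end

section
/- Let V be a finite rooted tree (as in the context), z : V → ℂ, ν₀ ∈ ℝ, Ŝ : V → ℂ, and let ν̂ : V → ℝ satisfy ν̂ r = ν₀ and ν̂ j = ν̂(p j) − 2·Re(conj(z j)·Ŝ j) for every j ≠ r. Then: (i) for every j ∈ V, ν̂ j = ν₀ − 2·∑_{k ∈ P(j)} Re(conj(z k)·Ŝ k); and (ii) if in addition Re(z k) ≥ 0, Im(z k) ≥ 0, Re(Ŝ k) ≥ 0, and Im(Ŝ k) ≥ 0 for every k ≠ r, then ν̂ j ≤ ν₀ for every j ∈ V. -/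
open FiniteRootedTree

/-! Induct along the parent map: stepping from `parent j` to `j` adds exactly `j` to the
path set, since `j` cannot be its own strict ancestor (a cycle through `j` would never
reach the fixed root). Under the sign conditions every summand
`Re(conj z · Ŝ) = Re z · Re Ŝ + Im z · Im Ŝ` is nonnegative. -/

theorem Function.IsPeriodicPt.eq_of_iterate_eq_fixedPt {α : Type*} {f : α → α} {x r : α}
    {c m : ℕ} (hx : Function.IsPeriodicPt f c x) (hc : 0 < c) (hr : f r = r)
    (hm : f^[m] x = r) : x = r := by
  have hcm : f^[c * m] x = x := hx.mul_const m
  obtain ⟨k, hk⟩ := Nat.exists_eq_add_of_le (Nat.le_mul_of_pos_left m hc)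
  rw [hk, add_comm, Function.iterate_add_apply, hm, Function.iterate_fixed hr] at hcm
  exact hcm.symm

lemma Complex.re_conj_mul_nonneg {z w : ℂ} (hzr : 0 ≤ z.re) (hzi : 0 ≤ z.im) (hwr : 0 ≤ w.re)
    (hwi : 0 ≤ w.im) : 0 ≤ ((starRingEnd ℂ) z * w).re := by
  simp only [Complex.mul_re, Complex.conj_re, Complex.conj_im, neg_mul, sub_neg_eq_add]
  positivity

namespace FiniteRootedTree

variable {V : Type*} (T : FiniteRootedTree V)

theorem induction_parent {motive : V → Prop} (root : motive T.root)
    (parent : ∀ j, j ≠ T.root → motive (T.parent j) → motive j) (j : V) : motive j := by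
  obtain ⟨n, hn⟩ := T.reaches_root j
  induction n generalizing j with
  | zero => obtain rfl : j = T.root := hn; exact root
  | succ n ih =>
    by_cases hj : j = T.root
    · exact hj ▸ root
    · exact parent j hj (ih _ hn)

lemma iterate_parent_ne_self {j : V} (hj : j ≠ T.root) (n : ℕ) :
    T.parent^[n + 1] j ≠ j := fun hcyc =>
  have ⟨_, hm⟩ := T.reaches_root j
  hj (Function.IsPeriodicPt.eq_of_iterate_eq_fixedPt hcyc n.succ_pos T.parent_root hm)

variable [Fintype V] [DecidableEq V]

@[simp]
lemma mem_pathSet {j k : V} : k ∈ T.pathSet j ↔ k ≠ T.root ∧ ∃ n, T.parent^[n] j = k := by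
  simp [pathSet]

lemma ne_root_of_mem_pathSet {j k : V} (hk : k ∈ T.pathSet j) : k ≠ T.root :=
  (T.mem_pathSet.mp hk).1

@[simp]
lemma pathSet_root : T.pathSet T.root = ∅ := by
  refine Finset.eq_empty_of_forall_notMem fun k hk => T.ne_root_of_mem_pathSet hk ?_
  obtain ⟨n, hn⟩ := (T.mem_pathSet.mp hk).2
  rw [← hn, Function.iterate_fixed T.parent_root]

lemma notMem_pathSet_parent {j : V} (hj : j ≠ T.root) : j ∉ T.pathSet (T.parent j) := by
  simp only [mem_pathSet, not_and, not_exists]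
  intro _ n hn
  exact T.iterate_parent_ne_self hj n (by rwa [Function.iterate_succ_apply])

lemma pathSet_of_ne_root {j : V} (hj : j ≠ T.root) :
    T.pathSet j = insert j (T.pathSet (T.parent j)) := by
  ext k
  simp only [mem_pathSet, Finset.mem_insert]
  constructor
  · rintro ⟨hk, _ | n, hn⟩
    · exact .inl hn.symm
    · exact .inr ⟨hk, n, hn⟩
  · rintro (rfl | ⟨hk, n, hn⟩)
    · exact ⟨hj, 0, rfl⟩
    · exact ⟨hk, n + 1, hn⟩

theorem eq_sub_sum_pathSet {M : Type*} [AddCommGroup M] {g w : V → M} {a : M}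
    (hroot : g T.root = a) (hrec : ∀ j, j ≠ T.root → g j = g (T.parent j) - w j) (j : V) :
    g j = a - ∑ k ∈ T.pathSet j, w k := by
  induction j using T.induction_parent with
  | root => simp [hroot]
  | parent j hj ih =>
    rw [hrec j hj, ih, T.pathSet_of_ne_root hj, Finset.sum_insert (T.notMem_pathSet_parent hj),
      sub_add_eq_sub_sub, sub_right_comm]

end FiniteRootedTree

/-- Lemma 1 (equation (10e)) and Assumption (A0)₂: (i) under the LPF voltage
recursion, the squared voltage at node `j` telescopes along the path from the
root to `j`: `ν̂ j = ν₀ − 2·∑_{k ∈ P(j)} Re(conj(z k)·Ŝ k)`; (ii) if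
moreover all impedances and all line flows have nonnegative real and
imaginary parts (no reverse power flows), then `ν̂ j ≤ ν₀` for every node. -/
theorem lpf_voltage_telescoping {V : Type*} [Fintype V] [DecidableEq V]
    (T : FiniteRootedTree V) (z : V → ℂ) (ν₀ : ℝ) (Shat : V → ℂ)
    (nuhat : V → ℝ) (hroot : nuhat T.root = ν₀)
    (hrec : ∀ j, j ≠ T.root →
      nuhat j = nuhat (T.parent j) - 2 * ((starRingEnd ℂ) (z j) * Shat j).re) :
    (∀ j, nuhat j =
      ν₀ - 2 * ∑ k ∈ T.pathSet j, ((starRingEnd ℂ) (z k) * Shat k).re) ∧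
    ((∀ k, k ≠ T.root →
        0 ≤ (z k).re ∧ 0 ≤ (z k).im ∧ 0 ≤ (Shat k).re ∧ 0 ≤ (Shat k).im) →
      ∀ j, nuhat j ≤ ν₀) := by
  have telescoping : ∀ j, nuhat j =
      ν₀ - 2 * ∑ k ∈ T.pathSet j, ((starRingEnd ℂ) (z k) * Shat k).re := fun j => by
    rw [Finset.mul_sum]
    exact T.eq_sub_sum_pathSet (w := fun k => 2 * ((starRingEnd ℂ) (z k) * Shat k).re)
      hroot hrec j
  refine ⟨telescoping, fun hflow j => ?_⟩
  have hsum : 0 ≤ ∑ k ∈ T.pathSet j, ((starRingEnd ℂ) (z k) * Shat k).re :=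
    Finset.sum_nonneg fun k hk => by
      obtain ⟨hzr, hzi, hSr, hSi⟩ := hflow k (T.ne_root_of_mem_pathSet hk)
      exact Complex.re_conj_mul_nonneg hzr hzi hSr hSi
  rw [telescoping j]
  linarith
end
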